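/- Every strictly convex norm on ℝ² is a URTC-norm. -/

import Mathlib

/-- `N` is a norm on `ℝ²`. -/
structure IsNorm (N : ℝ × ℝ → ℝ) : Prop where
  add_le : ∀ x y : ℝ × ℝ, N (x + y) ≤ N x + N y
  smul_eq : ∀ (c : ℝ) (x : ℝ × ℝ), N (c • x) = |c| * N x
  eq_zero_of : ∀ x : ℝ × ℝ, N x = 0 → x = 0

/-- `N` is a URTC-norm: for every `a b` at `N`-distance `1`, there are exactly two
points `x` with `N (a - x) = 1` and `N (b - x) = 1`. -/
def IsURTC (N : ℝ × ℝ → ℝ) : Prop :=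
  ∀ a b : ℝ × ℝ, N (a - b) = 1 →
    {x : ℝ × ℝ | N (a - x) = 1 ∧ N (b - x) = 1}.encard = 2

/-!
Equipping `ℝ × ℝ` with `N` gives a two-dimensional strictly convex normed space, so it suffices
to show that there the spheres of radius `r` around `0` and `v`, with `0 < ‖v‖ < 2 r`, meet in
exactly two points. Their intersection `S` is nonempty by connectedness of the sphere and the
intermediate value theorem, and `x ↦ v - x` maps it to itself without fixed points.
Two points of `S` on a common line parallel to `v` coincide: otherwise one of them would lie
strictly inside a segment whose endpoints are in one of the two closed balls. Given three points of
`S`, their images in the line `E ⧸ ℝ ∙ v` are collinear, so one of them, say `q`, lies between the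
other two, `p` and `s`, modulo `ℝ ∙ v`. The point of `[p, s]` in `q + ℝ ∙ v` lies in both closed
balls, hence equals `q`, and strict convexity forces `q ∈ {p, s}`. So `S` has at most two points.
-/

open Metric Module
open scoped Pointwise

theorem collinear_quotient_span_singleton {K V : Type*} [DivisionRing K] [AddCommGroup V]
    [Module K V] (hV : finrank K V = 2) {v : V} (hv : v ≠ 0) (s : Set (V ⧸ K ∙ v)) :
    Collinear K s := by
  have : Module.Finite K V := Module.finite_of_finrank_eq_succ hV
  have h := (K ∙ v).finrank_quotient_add_finrank
  rw [finrank_span_singleton hv, hV] at h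
  refine (Submodule.rank_le _).trans ?_
  rw [← finrank_eq_rank, show finrank K (V ⧸ K ∙ v) = 1 by omega, Nat.cast_one]

section NormedSpace

variable {E : Type*} [NormedAddCommGroup E]

theorem sub_mem_sphere_inter_sphere {v x : E} {r : ℝ} (hx : x ∈ sphere 0 r ∩ sphere v r) :
    v - x ∈ sphere 0 r ∩ sphere v r := by
  simp only [Set.mem_inter_iff, mem_sphere_iff_norm, sub_zero] at hx ⊢
  rw [sub_sub_cancel_left, norm_neg, norm_sub_rev]
  exact hx.symm

theorem sub_mem_closedBall_inter_closedBall {v x : E} {r : ℝ}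
    (hx : x ∈ closedBall 0 r ∩ closedBall v r) : v - x ∈ closedBall 0 r ∩ closedBall v r := by
  simp only [Set.mem_inter_iff, mem_closedBall_iff_norm, sub_zero] at hx ⊢
  rw [sub_sub_cancel_left, norm_neg, norm_sub_rev]
  exact hx.symm

variable [NormedSpace ℝ E]

theorem nonempty_sphere_inter_sphere (hE : 1 < Module.rank ℝ E) {v : E} {r : ℝ} (hv : v ≠ 0)
    (hvr : ‖v‖ ≤ 2 * r) : (sphere 0 r ∩ sphere v r).Nonempty := by
  have hr : 0 ≤ r := by linarith [norm_nonneg v]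
  set u := (r / ‖v‖) • v
  have hu : ‖u‖ = r := by
    rw [norm_smul, Real.norm_of_nonneg (by positivity), div_mul_cancel₀ _ (norm_ne_zero_iff.2 hv)]
  have hray : SameRay ℝ u v := SameRay.sameRay_nonneg_smul_left v (by positivity)
  have hle : ‖u - v‖ ≤ r := by
    rw [hray.norm_sub, hu, abs_sub_le_iff]
    constructor <;> linarith [norm_nonneg v]
  have hge : r ≤ ‖-u - v‖ := by
    rw [← neg_add', norm_neg, hray.norm_add, hu]
    linarith [norm_nonneg v]
  obtain ⟨x, hx, hxv⟩ := (isConnected_sphere hE 0 hr).isPreconnected.intermediate_value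
    (mem_sphere_zero_iff_norm.2 hu) (mem_sphere_zero_iff_norm.2 (by rwa [norm_neg]))
    (continuous_id.sub continuous_const).norm.continuousOn ⟨hle, hge⟩
  exact ⟨x, hx, mem_sphere_iff_norm.2 hxv⟩

variable [StrictConvexSpace ℝ E]

theorem eq_or_eq_of_mem_segment_of_norm_eq {x y z : E} {r : ℝ} (hx : ‖x‖ ≤ r) (hy : ‖y‖ ≤ r)
    (hz : z ∈ segment ℝ x y) (hzr : ‖z‖ = r) : z = x ∨ z = y := by
  rw [← insert_endpoints_openSegment] at hz
  rcases hz with rfl | rfl | hz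
  · exact Or.inl rfl
  · exact Or.inr rfl
  obtain rfl | hne := eq_or_ne x y
  · rw [openSegment_same] at hz
    exact Or.inl hz
  · have := openSegment_subset_ball_of_ne (mem_closedBall_zero_iff.2 hx)
      (mem_closedBall_zero_iff.2 hy) hne hz
    exact absurd hzr (mem_ball_zero_iff.1 this).ne

theorem eq_of_mem_sphere_inter_sphere_of_sub_mem_span {v q w : E} {r : ℝ}
    (hq : q ∈ sphere 0 r ∩ sphere v r) (hw : w ∈ closedBall 0 r ∩ closedBall v r)
    (hwq : w - q ∈ ℝ ∙ v) : w = q := by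
  obtain ⟨c, hc⟩ := Submodule.mem_span_singleton.1 hwq
  clear hwq
  -- `x ↦ v - x` swaps the two spheres and replaces `c` by `-c`
  wlog hc0 : 0 ≤ c generalizing q w c
  · have := this (sub_mem_sphere_inter_sphere hq) (sub_mem_closedBall_inter_closedBall hw)
      (-c) (by rw [neg_smul, hc]; abel) (by linarith)
    simpa using this
  have hw' : w = q + c • v := by rw [hc]; abel
  obtain rfl | hc0 := hc0.eq_or_lt
  · simpa using hw'
  by_contra hne
  simp only [Set.mem_inter_iff, mem_sphere_iff_norm, mem_closedBall_iff_norm, sub_zero] at hq hw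
  have hv : v ≠ 0 := by rintro rfl; simp [hw'] at hne
  have hqv : q - v ≠ w := by
    intro h
    have : (1 + c) • v = w - (q - v) := by rw [hw']; module
    rw [← h, sub_self] at this
    exact hv ((smul_eq_zero.1 this).resolve_left (by linarith))
  -- `q` lies strictly between `q - v` and `w = q + c • v`
  have hcomb : (c / (1 + c)) • (q - v) + (1 / (1 + c)) • w = q := by
    rw [hw']
    match_scalars <;> field_simp <;> ring
  have := norm_combo_lt_of_ne (a := c / (1 + c)) (b := 1 / (1 + c)) hq.2.le hw.1 hqv
    (by positivity) (by positivity) (by field_simp; ring)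
  rw [hcomb] at this
  exact this.ne hq.1

theorem eq_or_eq_of_wbtw_mkQ {v p q s : E} {r : ℝ} (hp : p ∈ sphere 0 r ∩ sphere v r)
    (hq : q ∈ sphere 0 r ∩ sphere v r) (hs : s ∈ sphere 0 r ∩ sphere v r)
    (h : Wbtw ℝ ((ℝ ∙ v).mkQ p) ((ℝ ∙ v).mkQ q) ((ℝ ∙ v).mkQ s)) : q = p ∨ q = s := by
  obtain ⟨t, ht, hts⟩ := h
  set w := AffineMap.lineMap p s t
  have hw : w ∈ segment ℝ p s := by
    rw [segment_eq_image_lineMap]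
    exact ⟨t, ht, rfl⟩
  have hlens : Convex ℝ (closedBall (0 : E) r ∩ closedBall v r) :=
    (convex_closedBall 0 r).inter (convex_closedBall v r)
  have hsub : sphere (0 : E) r ∩ sphere v r ⊆ closedBall 0 r ∩ closedBall v r :=
    Set.inter_subset_inter sphere_subset_closedBall sphere_subset_closedBall
  have hwq : w - q ∈ ℝ ∙ v := by
    rw [← Submodule.Quotient.eq]
    change (ℝ ∙ v).mkQ w = (ℝ ∙ v).mkQ q
    rw [← hts]
    exact (ℝ ∙ v).mkQ.toAffineMap.apply_lineMap p s t
  obtain rfl := eq_of_mem_sphere_inter_sphere_of_sub_mem_span hq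
    (hlens.segment_subset (hsub hp) (hsub hs) hw) hwq
  exact eq_or_eq_of_mem_segment_of_norm_eq (mem_sphere_zero_iff_norm.1 hp.1).le
    (mem_sphere_zero_iff_norm.1 hs.1).le hw (mem_sphere_zero_iff_norm.1 hq.1)

theorem encard_sphere_zero_inter_sphere (hE : finrank ℝ E = 2) {v : E} {r : ℝ} (hv : v ≠ 0)
    (hvr : ‖v‖ < 2 * r) : (sphere 0 r ∩ sphere v r).encard = 2 := by
  obtain ⟨x, hx⟩ := nonempty_sphere_inter_sphere
    (one_lt_rank_of_one_lt_finrank (by rw [hE]; exact one_lt_two)) hv hvr.le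
  have hx' := sub_mem_sphere_inter_sphere hx
  have hne : x ≠ v - x := by
    intro h
    have : v = (2 : ℝ) • x := by rw [two_smul]; nth_rewrite 1 [h]; abel
    rw [this, norm_smul, Real.norm_two, mem_sphere_zero_iff_norm.1 hx.1] at hvr
    exact hvr.false
  suffices sphere 0 r ∩ sphere v r = {x, v - x} by rw [this, Set.encard_pair hne]
  refine (Set.insert_subset hx (Set.singleton_subset_iff.2 hx')).antisymm' fun z hz => ?_
  rcases (collinear_quotient_span_singleton hE hv _).wbtw_or_wbtw_or_wbtw with h | h | h
  · rcases eq_or_eq_of_wbtw_mkQ hx hx' hz h with h | h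
    · exact absurd h.symm hne
    · exact Or.inr h.symm
  · rcases eq_or_eq_of_wbtw_mkQ hx' hz hx h with h | h
    · exact Or.inr h
    · exact Or.inl h
  · rcases eq_or_eq_of_wbtw_mkQ hz hx hx' h with h | h
    · exact Or.inl h.symm
    · exact absurd h hne

theorem encard_sphere_inter_sphere (hE : finrank ℝ E = 2) {a b : E} {r : ℝ} (hab : a ≠ b)
    (hr : dist a b < 2 * r) : (sphere a r ∩ sphere b r).encard = 2 := by
  have : sphere a r ∩ sphere b r = a +ᵥ (sphere 0 r ∩ sphere (b - a) r) := by
    rw [Set.vadd_set_inter, vadd_sphere, vadd_sphere, vadd_eq_add, vadd_eq_add, add_zero,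
      add_sub_cancel]
  rw [this, Set.encard_vadd_set]
  exact encard_sphere_zero_inter_sphere hE (sub_ne_zero.2 hab.symm)
    (by rwa [← dist_eq_norm, dist_comm])

end NormedSpace

namespace IsNorm

variable {N : ℝ × ℝ → ℝ}

theorem map_zero (hN : IsNorm N) : N 0 = 0 := by
  simpa using hN.smul_eq 0 0

theorem map_neg (hN : IsNorm N) (x : ℝ × ℝ) : N (-x) = N x := by
  simpa using hN.smul_eq (-1) x

theorem nonneg (hN : IsNorm N) (x : ℝ × ℝ) : 0 ≤ N x := by
  have := hN.add_le x (-x)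
  rw [add_neg_cancel, hN.map_zero, hN.map_neg] at this
  linarith

/-- `ℝ × ℝ` normed by `N`; the type mentions `hN` so that the instances below can find it. -/
def Plane (_ : IsNorm N) : Type := ℝ × ℝ

variable (hN : IsNorm N)

instance : AddCommGroup hN.Plane := inferInstanceAs (AddCommGroup (ℝ × ℝ))

instance : Module ℝ hN.Plane := inferInstanceAs (Module ℝ (ℝ × ℝ))

instance : Norm hN.Plane := ⟨N⟩

theorem normedSpaceCore : NormedSpace.Core ℝ hN.Plane where
  norm_nonneg := hN.nonneg
  norm_smul := hN.smul_eq
  norm_triangle := hN.add_le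
  norm_eq_zero_iff x := ⟨hN.eq_zero_of x, fun h => h ▸ hN.map_zero⟩

noncomputable instance : NormedAddCommGroup hN.Plane := .ofCore hN.normedSpaceCore

noncomputable instance : NormedSpace ℝ hN.Plane := .ofCore hN.normedSpaceCore

def toPlane : (ℝ × ℝ) ≃ₗ[ℝ] hN.Plane := LinearEquiv.refl ℝ (ℝ × ℝ)

theorem norm_toPlane (x : ℝ × ℝ) : ‖hN.toPlane x‖ = N x := rfl

theorem finrank_plane : finrank ℝ hN.Plane = 2 :=
  Module.finrank_prod.trans (by simp)

theorem strictConvexSpace_plane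
    (hSC : ∀ x y : ℝ × ℝ, N x = 1 → N y = 1 →
      segment ℝ x y ⊆ {z : ℝ × ℝ | N z = 1} → x = y) :
    StrictConvexSpace ℝ hN.Plane := by
  refine StrictConvexSpace.of_norm_combo_ne_one fun x y hx hy hne => ?_
  by_contra! h
  exact hne (hSC x y hx hy fun z ⟨a, b, ha, hb, hab, hz⟩ => hz ▸ h a b ha hb hab)

end IsNorm

/-- Every strictly convex norm on `ℝ²` (no non-degenerate segment on the unit sphere)
is a URTC-norm. -/
theorem URTC_of_strictly_convex (N : ℝ × ℝ → ℝ) (hN : IsNorm N)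
    (hSC : ∀ x y : ℝ × ℝ, N x = 1 → N y = 1 →
      segment ℝ x y ⊆ {z : ℝ × ℝ | N z = 1} → x = y) :
    IsURTC N := by
  intro a b hab
  have := hN.strictConvexSpace_plane hSC
  have hne : a ≠ b := by
    rintro rfl
    rw [sub_self, hN.map_zero] at hab
    exact zero_ne_one hab
  have hS : {x | N (a - x) = 1 ∧ N (b - x) = 1} =
      hN.toPlane ⁻¹' (sphere (hN.toPlane a) 1 ∩ sphere (hN.toPlane b) 1) := by
    ext x
    simp only [Set.mem_ofPred_eq, Set.preimage_inter, Set.mem_inter_iff, Set.mem_preimage,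
      mem_sphere', dist_eq_norm, ← map_sub, hN.norm_toPlane]
  rw [hS, Set.encard_preimage_of_bijective hN.toPlane.bijective]
  exact encard_sphere_inter_sphere hN.finrank_plane (hN.toPlane.injective.ne hne)
    (by rw [dist_eq_norm, ← map_sub, hN.norm_toPlane, hab]; norm_num)
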